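/- arXiv:1103.0959 — 6 statements merged into one kernel-verified Lean document; each statement's English description precedes it below -/
import Mathlib

section
/- Let C be a skeletal finite EI category and let α : x → y be a morphism between distinct objects x ≠ y. Then α can be written as a composite α_n ∘ ⋯ ∘ α_1 of unfactorizable morphisms. -/
open CategoryTheory

/-- A morphism `α : x ⟶ z` is unfactorizable if it is not an isomorphism and whenever it
factors as a composite of two morphisms, one of the two factors is an isomorphism. -/
def Unfactorizable {C : Type*} [Category C] {x z : C} (α : x ⟶ z) : Prop :=
  ¬ IsIso α ∧ ∀ (y : C) (β : x ⟶ y) (γ : y ⟶ z), α = β ≫ γ → IsIso β ∨ IsIso γ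

/-- A path in a category all of whose edges are unfactorizable morphisms. -/
inductive PathUnfact {C : Type*} [Category C] : ∀ {x y : C}, Quiver.Path x y → Prop
  | nil {x : C} : PathUnfact (Quiver.Path.nil : Quiver.Path x x)
  | cons {x y z : C} {p : Quiver.Path x y} {e : y ⟶ z} :
      PathUnfact p → Unfactorizable e → PathUnfact (p.cons e)

/-!
In a skeletal EI category, "there is a morphism `x ⟶ y`" is a partial order on objects: if
`f : x ⟶ y` and `g : y ⟶ x`, both composites are endomorphisms, hence isomorphisms, so `f` is an
isomorphism and `x = y`. A morphism `α : x ⟶ y` that is not unfactorizable splits as `β ≫ γ`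
through some `w` strictly between `x` and `y`, so the intervals `[x, w]` and `[w, y]` are strictly
smaller than `[x, y]`; with finitely many objects, induction on the size of the interval ends.
-/

namespace PathUnfact

variable {C : Type*} [Category C]

theorem comp {x y z : C} {p : Quiver.Path x y} {q : Quiver.Path y z}
    (hp : PathUnfact p) (hq : PathUnfact q) : PathUnfact (p.comp q) := by
  induction hq with
  | nil => exact hp
  | cons _ he ih => exact ih.cons he

end PathUnfact

namespace CategoryTheory

variable {C : Type*} [Category C]

theorem not_isIso_of_ne (hskel : ∀ x y : C, (x ≅ y) → x = y) {x y : C} (hxy : x ≠ y)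
    (f : x ⟶ y) : ¬ IsIso f :=
  fun _ => hxy (hskel x y (asIso f))

theorem eq_of_hom_of_hom (hEI : ∀ (x : C) (f : x ⟶ x), IsIso f)
    (hskel : ∀ x y : C, (x ≅ y) → x = y) {x y : C} (f : x ⟶ y) (g : y ⟶ x) : x = y := by
  have := hEI x (f ≫ g)
  have := hEI y (g ≫ f)
  have : Mono f := mono_of_mono f g
  have : IsSplitEpi f := IsSplitEpi.mk' ⟨inv (g ≫ f) ≫ g, by simp⟩
  have : IsIso f := isIso_of_mono_of_isSplitEpi f
  exact hskel x y (asIso f)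

def homInterval (x y : C) : Set C :=
  {z | Nonempty (x ⟶ z) ∧ Nonempty (z ⟶ y)}

section

variable (hEI : ∀ (x : C) (f : x ⟶ x), IsIso f) (hskel : ∀ x y : C, (x ≅ y) → x = y)
include hEI hskel

theorem homInterval_ssubset_left {x w y : C} (β : x ⟶ w) (γ : w ⟶ y) (hwy : w ≠ y) :
    homInterval x w ⊂ homInterval x y := by
  refine (Set.ssubset_iff_of_subset ?_).2 ⟨y, ⟨⟨β ≫ γ⟩, ⟨𝟙 y⟩⟩, ?_⟩
  · rintro z ⟨⟨f⟩, ⟨g⟩⟩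
    exact ⟨⟨f⟩, ⟨g ≫ γ⟩⟩
  · rintro ⟨-, ⟨g⟩⟩
    exact hwy (eq_of_hom_of_hom hEI hskel γ g)

theorem homInterval_ssubset_right {x w y : C} (β : x ⟶ w) (γ : w ⟶ y) (hxw : x ≠ w) :
    homInterval w y ⊂ homInterval x y := by
  refine (Set.ssubset_iff_of_subset ?_).2 ⟨x, ⟨⟨𝟙 x⟩, ⟨β ≫ γ⟩⟩, ?_⟩
  · rintro z ⟨⟨f⟩, ⟨g⟩⟩
    exact ⟨⟨β ≫ f⟩, ⟨g⟩⟩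
  · rintro ⟨⟨f⟩, -⟩
    exact hxw (eq_of_hom_of_hom hEI hskel β f)

theorem exists_pathUnfact_composePath_eq [Finite C] {x y : C} (hxy : x ≠ y) (α : x ⟶ y) :
    ∃ p : Quiver.Path x y, PathUnfact p ∧ composePath p = α := by
  by_cases hα : Unfactorizable α
  · exact ⟨Quiver.Path.nil.cons α, PathUnfact.nil.cons hα, by simp⟩
  obtain ⟨w, β, γ, rfl, hβ, hγ⟩ : ∃ (w : C) (β : x ⟶ w) (γ : w ⟶ y),
      α = β ≫ γ ∧ ¬ IsIso β ∧ ¬ IsIso γ := by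
    simpa [Unfactorizable, not_isIso_of_ne hskel hxy α] using hα
  have hxw : x ≠ w := by rintro rfl; exact hβ (hEI x β)
  have hwy : w ≠ y := by rintro rfl; exact hγ (hEI w γ)
  obtain ⟨p, hp, rfl⟩ := exists_pathUnfact_composePath_eq hxw β
  obtain ⟨q, hq, rfl⟩ := exists_pathUnfact_composePath_eq hwy γ
  exact ⟨p.comp q, hp.comp hq, composePath_comp p q⟩
termination_by (homInterval x y).ncard
decreasing_by
  · exact Set.ncard_lt_ncard (homInterval_ssubset_left hEI hskel β γ hwy)
  · exact Set.ncard_lt_ncard (homInterval_ssubset_right hEI hskel β γ hxw)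

end

end CategoryTheory

/-- In a skeletal finite EI category, every morphism between distinct objects can be
written as a composite of unfactorizable morphisms. -/
theorem stmt2 {C : Type*} [Category C] [Finite (Σ x y : C, x ⟶ y)]
    (hEI : ∀ (x : C) (f : x ⟶ x), IsIso f)
    (hskel : ∀ x y : C, (x ≅ y) → x = y)
    {x y : C} (hxy : x ≠ y) (α : x ⟶ y) :
    ∃ p : Quiver.Path x y, PathUnfact p ∧ composePath p = α := by
  have : Finite C :=
    .of_injective (fun x => (⟨x, x, 𝟙 x⟩ : Σ x y : C, x ⟶ y)) fun _ _ h => congrArg Sigma.fst h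
  exact exists_pathUnfact_composePath_eq hEI hskel hxy α
end

section
/- Let G and H be finite groups acting on the right and left respectively on a set X (compatibly, making X an (H,G)-biset), and fix α ∈ X. Let G₀ = Stab_G(α) = {g ∈ G : α·g = α}, H₀ = Stab_H(α) = {h ∈ H : h·α = α}, G₁ = {g ∈ G : ∃ h ∈ H, α·g = h·α}, and H₁ = {h ∈ H : ∃ g ∈ G, h·α = α·g}. Then G₀ and G₁ are subgroups of G, H₀ and H₁ are subgroups of H, G₀ is normal in G₁, H₀ is normal in H₁, and G₁/G₀ ≅ H₁/H₀ as groups. -/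
/-!
The pairs `(h, g)` with `h • α = α • g` form a subgroup `I` of `H × G`; closure under products is
exactly the commutation of the two actions. `H₁` and `G₁` are the projections of `I`, while `H₀`
and `G₀` are the kernels of the opposite projections, viewed in `H` and `G`. The isomorphism
`G₁ / G₀ ≃ H₁ / H₀` is then Goursat's lemma applied to `I` inside `H₁ × G₁`.
-/

open MulOpposite

namespace Subgroup

variable {G H : Type*} [Group G] [Group H] (I : Subgroup (G × H))

lemma goursatFst_le_map_fst : I.goursatFst ≤ I.map (MonoidHom.fst G H) :=
  fun g hg => ⟨(g, 1), mem_goursatFst.1 hg, rfl⟩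

lemma goursatSnd_le_map_snd : I.goursatSnd ≤ I.map (MonoidHom.snd G H) :=
  fun h hh => ⟨(1, h), mem_goursatSnd.1 hh, rfl⟩

-- Both projections of this subgroup are surjective, so `goursat_surjective` applies to it.
def restrictProjections : Subgroup (I.map (MonoidHom.fst G H) × I.map (MonoidHom.snd G H)) :=
  I.comap ((I.map _).subtype.prodMap (I.map _).subtype)

lemma restrictProjections_fst_surjective :
    Function.Surjective (Prod.fst ∘ I.restrictProjections.subtype) := by
  rintro ⟨g, p, hp, rfl⟩
  exact ⟨⟨(⟨p.1, p, hp, rfl⟩, ⟨p.2, p, hp, rfl⟩), hp⟩, rfl⟩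

lemma restrictProjections_snd_surjective :
    Function.Surjective (Prod.snd ∘ I.restrictProjections.subtype) := by
  rintro ⟨h, p, hp, rfl⟩
  exact ⟨⟨(⟨p.1, p, hp, rfl⟩, ⟨p.2, p, hp, rfl⟩), hp⟩, rfl⟩

lemma goursatFst_restrictProjections :
    I.restrictProjections.goursatFst = I.goursatFst.subgroupOf (I.map (MonoidHom.fst G H)) := by
  ext g
  simp [restrictProjections, mem_subgroupOf]

lemma goursatSnd_restrictProjections :
    I.restrictProjections.goursatSnd = I.goursatSnd.subgroupOf (I.map (MonoidHom.snd G H)) := by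
  ext h
  simp [restrictProjections, mem_subgroupOf]

lemma normal_goursatFst_subgroupOf :
    (I.goursatFst.subgroupOf (I.map (MonoidHom.fst G H))).Normal :=
  I.goursatFst_restrictProjections ▸ normal_goursatFst I.restrictProjections_fst_surjective

lemma normal_goursatSnd_subgroupOf :
    (I.goursatSnd.subgroupOf (I.map (MonoidHom.snd G H))).Normal :=
  I.goursatSnd_restrictProjections ▸ normal_goursatSnd I.restrictProjections_snd_surjective

lemma nonempty_mulEquiv_quotient_goursat
    [(I.goursatFst.subgroupOf (I.map (MonoidHom.fst G H))).Normal]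
    [(I.goursatSnd.subgroupOf (I.map (MonoidHom.snd G H))).Normal] :
    Nonempty (I.map (MonoidHom.fst G H) ⧸ I.goursatFst.subgroupOf (I.map (MonoidHom.fst G H)) ≃*
      I.map (MonoidHom.snd G H) ⧸ I.goursatSnd.subgroupOf (I.map (MonoidHom.snd G H))) := by
  have := normal_goursatFst I.restrictProjections_fst_surjective
  have := normal_goursatSnd I.restrictProjections_snd_surjective
  obtain ⟨e, -⟩ := goursat_surjective I.restrictProjections_fst_surjective
    I.restrictProjections_snd_surjective
  exact ⟨(QuotientGroup.quotientMulEquivOfEq I.goursatFst_restrictProjections.symm).trans <|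
    e.trans (QuotientGroup.quotientMulEquivOfEq I.goursatSnd_restrictProjections)⟩

end Subgroup

section Biset

variable {G H X : Type*} [Group G] [Group H] [MulAction H X] [MulAction Gᵐᵒᵖ X]
  [SMulCommClass Gᵐᵒᵖ H X]

variable (H) in
def bisetPairs (α : X) : Subgroup (H × G) where
  carrier := {p | p.1 • α = op p.2 • α}
  one_mem' := by simp
  mul_mem' := by
    rintro ⟨h₁, g₁⟩ ⟨h₂, g₂⟩ (e₁ : h₁ • α = op g₁ • α) (e₂ : h₂ • α = op g₂ • α)
    show (h₁ * h₂) • α = op (g₁ * g₂) • α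
    rw [mul_smul, e₂, ← smul_comm, e₁, op_mul, mul_smul]
  inv_mem' := by
    rintro ⟨h, g⟩ (e : h • α = op g • α)
    show h⁻¹ • α = op g⁻¹ • α
    rw [op_inv, eq_inv_smul_iff, smul_comm, ← e, inv_smul_smul]

lemma mem_goursatFst_bisetPairs {α : X} {h : H} :
    h ∈ (bisetPairs H α : Subgroup (H × G)).goursatFst ↔ h • α = α := by
  simp [bisetPairs]

lemma mem_goursatSnd_bisetPairs {α : X} {g : G} :
    g ∈ (bisetPairs H α).goursatSnd ↔ op g • α = α := by
  simp [bisetPairs, eq_comm]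

lemma mem_map_fst_bisetPairs {α : X} {h : H} :
    h ∈ (bisetPairs H α).map (MonoidHom.fst H G) ↔ ∃ g : G, h • α = op g • α := by
  simp [bisetPairs]

lemma mem_map_snd_bisetPairs {α : X} {g : G} :
    g ∈ (bisetPairs H α).map (MonoidHom.snd H G) ↔ ∃ h : H, op g • α = h • α := by
  simp [bisetPairs, eq_comm]

end Biset

theorem stmt3_general {G H X : Type*} [Group G] [Group H]
    [MulAction H X] [MulAction Gᵐᵒᵖ X]
    (hcomm : ∀ (h : H) (g : Gᵐᵒᵖ) (x : X), g • (h • x) = h • (g • x))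
    (α : X) :
    ∃ (G₀ G₁ : Subgroup G) (H₀ H₁ : Subgroup H),
      (∀ g : G, g ∈ G₀ ↔ op g • α = α) ∧
      (∀ g : G, g ∈ G₁ ↔ ∃ h : H, op g • α = h • α) ∧
      (∀ h : H, h ∈ H₀ ↔ h • α = α) ∧
      (∀ h : H, h ∈ H₁ ↔ ∃ g : G, h • α = op g • α) ∧
      G₀ ≤ G₁ ∧ H₀ ≤ H₁ ∧
      (G₀.subgroupOf G₁).Normal ∧ (H₀.subgroupOf H₁).Normal ∧
      (∀ (h1 : (G₀.subgroupOf G₁).Normal) (h2 : (H₀.subgroupOf H₁).Normal),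
        Nonempty ((G₁ ⧸ G₀.subgroupOf G₁) ≃* (H₁ ⧸ H₀.subgroupOf H₁))) := by
  have : SMulCommClass Gᵐᵒᵖ H X := ⟨fun g h x => hcomm h g x⟩
  let I : Subgroup (H × G) := bisetPairs H α
  refine ⟨I.goursatSnd, I.map (MonoidHom.snd H G), I.goursatFst, I.map (MonoidHom.fst H G),
    fun _ => mem_goursatSnd_bisetPairs, fun _ => mem_map_snd_bisetPairs,
    fun _ => mem_goursatFst_bisetPairs, fun _ => mem_map_fst_bisetPairs,
    I.goursatSnd_le_map_snd, I.goursatFst_le_map_fst,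
    I.normal_goursatSnd_subgroupOf, I.normal_goursatFst_subgroupOf, fun _ _ => ?_⟩
  obtain ⟨e⟩ := I.nonempty_mulEquiv_quotient_goursat
  exact ⟨e.symm⟩

/-- Biset stabilizer lemma: for an `(H,G)`-biset `X` (left `H`-action and right `G`-action,
encoded as a `Gᵐᵒᵖ`-action, commuting with each other) and a fixed `α ∈ X`, the sets
`G₀ = {g | α·g = α}`, `G₁ = {g | ∃ h, α·g = h·α}` are subgroups of `G`,
`H₀ = {h | h·α = α}`, `H₁ = {h | ∃ g, h·α = α·g}` are subgroups of `H`,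
with `G₀ ⊴ G₁`, `H₀ ⊴ H₁`, and `G₁/G₀ ≅ H₁/H₀`. -/
theorem stmt3 {G H X : Type*} [Group G] [Group H] [Fintype G] [Fintype H]
    [MulAction H X] [MulAction Gᵐᵒᵖ X]
    (hcomm : ∀ (h : H) (g : Gᵐᵒᵖ) (x : X), g • (h • x) = h • (g • x))
    (α : X) :
    ∃ (G₀ G₁ : Subgroup G) (H₀ H₁ : Subgroup H),
      (∀ g : G, g ∈ G₀ ↔ op g • α = α) ∧
      (∀ g : G, g ∈ G₁ ↔ ∃ h : H, op g • α = h • α) ∧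
      (∀ h : H, h ∈ H₀ ↔ h • α = α) ∧
      (∀ h : H, h ∈ H₁ ↔ ∃ g : G, h • α = op g • α) ∧
      G₀ ≤ G₁ ∧ H₀ ≤ H₁ ∧
      (G₀.subgroupOf G₁).Normal ∧ (H₀.subgroupOf H₁).Normal ∧
      (∀ (h1 : (G₀.subgroupOf G₁).Normal) (h2 : (H₀.subgroupOf H₁).Normal),
        Nonempty ((G₁ ⧸ G₀.subgroupOf G₁) ≃* (H₁ ⧸ H₀.subgroupOf H₁))) :=
  stmt3_general hcomm α
end

section
/- Let C be a skeletal finite EI category and k a field such that for every object x the group Aut_C(x) has order invertible in k. Then the Jacobson radical of the category algebra kC equals the k-linear span of the non-isomorphisms of C, and the quotient algebra kC / rad(kC) is isomorphic to the direct product over all objects x of the group algebras k Aut_C(x). -/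
open CategoryTheory
open scoped Classical

/-- Witness that `A` is the category algebra `kC` of the finite category `C`: it has a
`k`-basis indexed by the morphisms of `C`, the product of two basis elements is the basis
element of their composite when composable and `0` otherwise, and the identity element is
the sum of the identity morphisms. -/
structure CategoryAlgebraData (k : Type*) [Field k] (C : Type*) [Category C] [Fintype C]
    (A : Type*) [Ring A] [Algebra k A] where
  basis : Module.Basis (Σ x y : C, x ⟶ y) k A
  basis_mul_basis : ∀ (x₁ y₁ x₂ y₂ : C) (f : x₁ ⟶ y₁) (g : x₂ ⟶ y₂),
    basis ⟨x₁, y₁, f⟩ * basis ⟨x₂, y₂, g⟩ =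
      if h : y₂ = x₁ then basis ⟨x₂, y₁, g ≫ eqToHom h ≫ f⟩ else 0
  one_def : (1 : A) = ∑ x : C, basis ⟨x, x, 𝟙 x⟩

/-! In an EI category a non-isomorphism `x ⟶ y` strictly enlarges the set of objects that map
to its target, so any product of more than `|C|` non-isomorphisms in `kC` vanishes: the span `Λ`
of the non-isomorphisms is a left ideal of nilpotent elements and therefore lies in the radical.
If `C` is also skeletal, the non-isomorphisms are exactly the morphisms between distinct objects,
so killing them is an algebra map from `kC` onto `∏ₓ k Aut(x)` with kernel `Λ`. The target is
semisimple by Maschke's theorem, so the radical lies in that kernel. -/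

namespace CategoryTheory

def IsEI (C : Type*) [Category C] : Prop := ∀ (x : C) (f : x ⟶ x), IsIso f

variable {C : Type*} [Category C]

namespace IsEI

theorem isIso_of_hom (hC : IsEI C) {x y : C} (f : x ⟶ y) (g : y ⟶ x) : IsIso f := by
  have := hC x (f ≫ g)
  have := hC y (g ≫ f)
  have : IsSplitMono f := .mk' ⟨g ≫ inv (f ≫ g), by rw [← Category.assoc, IsIso.hom_inv_id]⟩
  have : IsSplitEpi f := .mk' ⟨inv (g ≫ f) ≫ g, by rw [Category.assoc, IsIso.inv_hom_id]⟩
  exact isIso_of_epi_of_isSplitMono f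

theorem not_isIso_comp_left (hC : IsEI C) {x y z : C} (g : x ⟶ y) (f : y ⟶ z)
    (hg : ¬IsIso g) : ¬IsIso (g ≫ f) := fun _ => hg (hC.isIso_of_hom g (f ≫ inv (g ≫ f)))

theorem ne_of_not_isIso (hC : IsEI C) {x y : C} (f : x ⟶ y) (hf : ¬IsIso f) : x ≠ y := by
  rintro rfl
  exact hf (hC x f)

theorem eq_of_hom_of_skeletal (hC : IsEI C) (hS : Skeletal C) {x y : C} (f : x ⟶ y)
    (g : y ⟶ x) : x = y :=
  have := hC.isIso_of_hom f g
  hS ⟨asIso f⟩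

theorem not_isIso_iff_ne (hC : IsEI C) (hS : Skeletal C) {x y : C} (f : x ⟶ y) :
    ¬IsIso f ↔ x ≠ y :=
  ⟨hC.ne_of_not_isIso f, fun hxy _ => hxy (hS ⟨asIso f⟩)⟩

noncomputable def autOfEq (hC : IsEI C) {x y : C} (f : x ⟶ y) (h : x = y) : Aut x :=
  have := hC x (f ≫ eqToHom h.symm)
  asIso (f ≫ eqToHom h.symm)

theorem hom_autOfEq (hC : IsEI C) {x : C} (f : x ⟶ x) : (hC.autOfEq f rfl).hom = f := by
  simp [autOfEq]

theorem autOfEq_hom (hC : IsEI C) {x : C} (a : Aut x) : hC.autOfEq a.hom rfl = a :=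
  Iso.ext (by simp [autOfEq])

end IsEI

variable [Fintype C]

noncomputable def sourceCount (x : C) : ℕ :=
  (Finset.univ.filter fun z : C => Nonempty (z ⟶ x)).card

theorem sourceCount_le_card (x : C) : sourceCount x ≤ Fintype.card C :=
  Finset.card_filter_le _ _

theorem IsEI.sourceCount_lt (hC : IsEI C) {x y : C} (f : x ⟶ y) (hf : ¬IsIso f) :
    sourceCount x < sourceCount y := by
  refine Finset.card_lt_card ⟨fun z hz => ?_, fun hsub => ?_⟩
  · obtain ⟨g⟩ := (Finset.mem_filter.mp hz).2
    exact Finset.mem_filter.mpr ⟨Finset.mem_univ z, ⟨g ≫ f⟩⟩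
  · have hy : y ∈ Finset.univ.filter fun z : C => Nonempty (z ⟶ y) :=
      Finset.mem_filter.mpr ⟨Finset.mem_univ y, ⟨𝟙 y⟩⟩
    obtain ⟨g⟩ := (Finset.mem_filter.mp (hsub hy)).2
    exact hf (hC.isIso_of_hom f g)

end CategoryTheory

theorem Ideal.mem_jacobson_bot_of_isNilpotent_mul {R : Type*} [Ring R] {x : R}
    (h : ∀ y, IsNilpotent (y * x)) : x ∈ jacobson (⊥ : Ideal R) := by
  refine mem_jacobson_iff.mpr fun y => ?_
  obtain ⟨u, hu⟩ := (h y).isUnit_add_one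
  refine ⟨↑u⁻¹, ?_⟩
  rw [Submodule.mem_bot, mul_assoc, ← mul_add_one, ← hu, Units.inv_mul, sub_self]

namespace CategoryAlgebraData

open CategoryTheory

variable {k : Type*} [Field k] {C : Type*} [Category C] [Fintype C]
  {A : Type*} [Ring A] [Algebra k A] (hA : CategoryAlgebraData k C A)

def homSpan (P : ∀ ⦃x y : C⦄, (x ⟶ y) → Prop) : Submodule k A :=
  Submodule.span k {a | ∃ (x y : C) (f : x ⟶ y), P f ∧ a = hA.basis ⟨x, y, f⟩}

def nonIsoSpan : Submodule k A := hA.homSpan fun _ _ f => ¬IsIso f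

theorem homSpan_mono {P Q : ∀ ⦃x y : C⦄, (x ⟶ y) → Prop}
    (h : ∀ ⦃x y : C⦄ (f : x ⟶ y), P f → Q f) : hA.homSpan P ≤ hA.homSpan Q :=
  Submodule.span_mono fun _ ⟨x, y, f, hf, ha⟩ => ⟨x, y, f, h f hf, ha⟩

theorem homSpan_eq_bot {P : ∀ ⦃x y : C⦄, (x ⟶ y) → Prop}
    (h : ∀ ⦃x y : C⦄ (f : x ⟶ y), ¬P f) : hA.homSpan P = ⊥ :=
  Submodule.span_eq_bot.mpr fun _ ⟨_, _, f, hf, _⟩ => (h f hf).elim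

theorem homSpan_true : hA.homSpan (fun _ _ _ => True) = ⊤ := by
  rw [eq_top_iff, ← hA.basis.span_eq]
  exact Submodule.span_mono fun _ ⟨⟨x, y, f⟩, ha⟩ => ⟨x, y, f, trivial, ha.symm⟩

theorem homSpan_mul_homSpan_le {P Q R : ∀ ⦃x y : C⦄, (x ⟶ y) → Prop}
    (h : ∀ ⦃x y z : C⦄ (g : x ⟶ y) (f : y ⟶ z), P f → Q g → R (g ≫ f)) :
    hA.homSpan P * hA.homSpan Q ≤ hA.homSpan R := by
  rw [homSpan, homSpan, Submodule.span_mul_span, Submodule.span_le, Set.mul_subset_iff]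
  rintro _ ⟨x₁, y₁, f, hf, rfl⟩ _ ⟨x₂, y₂, g, hg, rfl⟩
  rw [hA.basis_mul_basis]
  split_ifs with h'
  · subst h'
    exact Submodule.subset_span ⟨x₂, y₁, g ≫ f, h g f hf hg, by simp⟩
  · exact zero_mem _

variable {hA}

theorem mul_mem_nonIsoSpan (hC : IsEI C) (a : A) {l : A} (hl : l ∈ hA.nonIsoSpan) :
    a * l ∈ hA.nonIsoSpan := by
  refine hA.homSpan_mul_homSpan_le (P := fun _ _ _ => True) ?_ (Submodule.mul_mem_mul ?_ hl)
  · exact fun _ _ _ g f _ hg => hC.not_isIso_comp_left g f hg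
  · simp [homSpan_true]

theorem pow_mem_homSpan_sourceCount (hC : IsEI C) {l : A} (hl : l ∈ hA.nonIsoSpan) (n : ℕ) :
    l ^ (n + 1) ∈ hA.homSpan fun x y _ => sourceCount x + (n + 1) ≤ sourceCount y := by
  induction n with
  | zero =>
    rw [zero_add, pow_one]
    exact hA.homSpan_mono (fun _ _ f hf => hC.sourceCount_lt f hf) hl
  | succ n ih =>
    rw [pow_succ']
    refine hA.homSpan_mul_homSpan_le ?_ (Submodule.mul_mem_mul hl ih)
    intro x y z g f hf hg
    have := hC.sourceCount_lt f hf
    omega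

theorem isNilpotent_of_mem_nonIsoSpan (hC : IsEI C) {l : A} (hl : l ∈ hA.nonIsoSpan) :
    IsNilpotent l := by
  refine ⟨Fintype.card C + 1, ?_⟩
  have hbot := hA.homSpan_eq_bot
    (P := fun x y _ => sourceCount x + (Fintype.card C + 1) ≤ sourceCount y)
    fun _ y _ h => by have := sourceCount_le_card y; omega
  simpa [hbot] using pow_mem_homSpan_sourceCount hC hl (Fintype.card C)

theorem nonIsoSpan_le_jacobson (hC : IsEI C) :
    (hA.nonIsoSpan : Set A) ⊆ Ideal.jacobson (⊥ : Ideal A) := fun _ hl =>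
  Ideal.mem_jacobson_bot_of_isNilpotent_mul fun a =>
    isNilpotent_of_mem_nonIsoSpan hC (mul_mem_nonIsoSpan hC a hl)

variable (k C) in
noncomputable def autBasis :
    Module.Basis (Σ x : C, Aut x) k (∀ x : C, MonoidAlgebra k (Aut x)) :=
  Pi.basis fun x => MonoidAlgebra.basis (Aut x) k

variable (hA) in
noncomputable def toGroupAlgebras (hC : IsEI C) : A →ₗ[k] ∀ x : C, MonoidAlgebra k (Aut x) :=
  hA.basis.constr k fun σ =>
    if h : σ.1 = σ.2.1 then autBasis k C ⟨σ.1, hC.autOfEq σ.2.2 h⟩ else 0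

theorem toGroupAlgebras_basis_aut (hC : IsEI C) {x : C} (a : Aut x) :
    hA.toGroupAlgebras hC (hA.basis ⟨x, x, a.hom⟩) = autBasis k C ⟨x, a⟩ := by
  simp [toGroupAlgebras, IsEI.autOfEq_hom]

theorem toGroupAlgebras_basis_of_ne (hC : IsEI C) {x y : C} (f : x ⟶ y) (h : x ≠ y) :
    hA.toGroupAlgebras hC (hA.basis ⟨x, y, f⟩) = 0 := by
  simp [toGroupAlgebras, h]

theorem toGroupAlgebras_basis_mul_basis (hC : IsEI C) (hS : Skeletal C) {x₁ y₁ x₂ y₂ : C}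
    (f : x₁ ⟶ y₁) (g : x₂ ⟶ y₂) :
    hA.toGroupAlgebras hC (hA.basis ⟨x₁, y₁, f⟩ * hA.basis ⟨x₂, y₂, g⟩) =
      hA.toGroupAlgebras hC (hA.basis ⟨x₁, y₁, f⟩) *
        hA.toGroupAlgebras hC (hA.basis ⟨x₂, y₂, g⟩) := by
  by_cases hall : x₁ = y₁ ∧ x₂ = x₁ ∧ y₂ = x₁
  · obtain ⟨rfl, rfl, rfl⟩ := hall
    obtain ⟨a, rfl⟩ : ∃ a : Aut _, a.hom = f := ⟨_, hC.hom_autOfEq f⟩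
    obtain ⟨b, rfl⟩ : ∃ b : Aut _, b.hom = g := ⟨_, hC.hom_autOfEq g⟩
    rw [hA.basis_mul_basis, dif_pos rfl, eqToHom_refl, Category.id_comp]
    -- in `Aut x`, `(a * b).hom = b.hom ≫ a.hom`
    change hA.toGroupAlgebras hC (hA.basis ⟨_, _, (a * b).hom⟩) = _
    simp only [toGroupAlgebras_basis_aut, autBasis, Pi.basis_apply, MonoidAlgebra.basis_apply,
      ← Pi.single_mul, MonoidAlgebra.single_mul_single, mul_one]
  -- a composite `x₂ ⟶ x₁ ⟶ x₂` forces `x₁ = x₂`, so the product lies off the diagonal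
  have hlhs : hA.basis ⟨x₁, y₁, f⟩ * hA.basis ⟨x₂, y₂, g⟩ ∈
      LinearMap.ker (hA.toGroupAlgebras hC) := by
    rw [hA.basis_mul_basis]
    split_ifs with hyx
    · subst hyx
      refine toGroupAlgebras_basis_of_ne hC _ fun hxy => hall ?_
      subst hxy
      obtain rfl := hC.eq_of_hom_of_skeletal hS f g
      exact ⟨rfl, rfl, rfl⟩
    · exact zero_mem _
  rw [LinearMap.mem_ker.mp hlhs]
  by_cases h₁ : x₁ = y₁
  · by_cases h₂ : x₂ = y₂
    · subst h₁ h₂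
      have hne : x₁ ≠ x₂ := fun h => hall ⟨rfl, h.symm, h.symm⟩
      rw [toGroupAlgebras, hA.basis.constr_basis, hA.basis.constr_basis, dif_pos rfl,
        dif_pos rfl, autBasis, Pi.basis_apply, Pi.basis_apply, ← Pi.single_mul_left,
        Pi.single_eq_of_ne hne, mul_zero, Pi.single_zero]
    · rw [toGroupAlgebras_basis_of_ne hC g h₂, mul_zero]
  · rw [toGroupAlgebras_basis_of_ne hC f h₁, zero_mul]

theorem toGroupAlgebras_mul (hC : IsEI C) (hS : Skeletal C) (a b : A) :
    hA.toGroupAlgebras hC (a * b) = hA.toGroupAlgebras hC a * hA.toGroupAlgebras hC b := by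
  have h : (LinearMap.mul k A).compr₂ (hA.toGroupAlgebras hC) =
      (LinearMap.mul k _).compl₁₂ (hA.toGroupAlgebras hC) (hA.toGroupAlgebras hC) :=
    hA.basis.ext fun ⟨_, _, f⟩ => hA.basis.ext fun ⟨_, _, g⟩ => by
      simpa using toGroupAlgebras_basis_mul_basis hC hS f g
  simpa using LinearMap.congr_fun₂ h a b

theorem toGroupAlgebras_one (hC : IsEI C) : hA.toGroupAlgebras hC 1 = 1 := by
  rw [hA.one_def, map_sum, ← Finset.univ_sum_single (1 : ∀ x : C, MonoidAlgebra k (Aut x))]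
  refine Finset.sum_congr rfl fun x _ => ?_
  have h := toGroupAlgebras_basis_aut (hA := hA) hC (1 : Aut x)
  rwa [autBasis, Pi.basis_apply, MonoidAlgebra.basis_apply, ← MonoidAlgebra.one_def] at h

variable (hA) in
noncomputable def toGroupAlgebrasAlgHom (hC : IsEI C) (hS : Skeletal C) :
    A →ₐ[k] ∀ x : C, MonoidAlgebra k (Aut x) :=
  AlgHom.ofLinearMap (hA.toGroupAlgebras hC) (toGroupAlgebras_one hC) (toGroupAlgebras_mul hC hS)

variable (hA) in
noncomputable def ofGroupAlgebras : (∀ x : C, MonoidAlgebra k (Aut x)) →ₗ[k] A :=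
  (autBasis k C).constr k fun p => hA.basis ⟨p.1, p.1, p.2.hom⟩

theorem ofGroupAlgebras_autBasis {x : C} (a : Aut x) :
    hA.ofGroupAlgebras (autBasis k C ⟨x, a⟩) = hA.basis ⟨x, x, a.hom⟩ :=
  (autBasis k C).constr_basis k _ _

theorem toGroupAlgebras_ofGroupAlgebras (hC : IsEI C) (t : ∀ x : C, MonoidAlgebra k (Aut x)) :
    hA.toGroupAlgebras hC (hA.ofGroupAlgebras t) = t := by
  change (hA.toGroupAlgebras hC ∘ₗ hA.ofGroupAlgebras) t = LinearMap.id (R := k) t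
  congr 1
  refine (autBasis k C).ext fun ⟨x, a⟩ => ?_
  rw [LinearMap.comp_apply, ofGroupAlgebras_autBasis, toGroupAlgebras_basis_aut,
    LinearMap.id_apply]

theorem toGroupAlgebras_surjective (hC : IsEI C) :
    Function.Surjective (hA.toGroupAlgebras hC) :=
  fun t => ⟨hA.ofGroupAlgebras t, toGroupAlgebras_ofGroupAlgebras hC t⟩

theorem sub_ofGroupAlgebras_toGroupAlgebras_mem (hC : IsEI C) (hS : Skeletal C) (a : A) :
    a - hA.ofGroupAlgebras (hA.toGroupAlgebras hC a) ∈ hA.nonIsoSpan := by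
  suffices h : LinearMap.range (LinearMap.id - hA.ofGroupAlgebras ∘ₗ hA.toGroupAlgebras hC) ≤
      hA.nonIsoSpan from h ⟨a, rfl⟩
  rw [LinearMap.range_eq_map, ← hA.basis.span_eq, Submodule.map_span_le]
  rintro _ ⟨⟨x, y, f⟩, rfl⟩
  by_cases hxy : x = y
  · subst hxy
    obtain ⟨a, rfl⟩ : ∃ a : Aut x, a.hom = f := ⟨_, hC.hom_autOfEq f⟩
    simp only [LinearMap.sub_apply, LinearMap.id_apply, LinearMap.comp_apply,
      toGroupAlgebras_basis_aut, ofGroupAlgebras_autBasis, sub_self, zero_mem]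
  · refine Submodule.subset_span ⟨x, y, f, (hC.not_isIso_iff_ne hS f).mpr hxy, ?_⟩
    simp [toGroupAlgebras_basis_of_ne hC f hxy]

theorem ker_toGroupAlgebras (hC : IsEI C) (hS : Skeletal C) :
    LinearMap.ker (hA.toGroupAlgebras hC) = hA.nonIsoSpan := by
  refine le_antisymm (fun a ha => ?_) (Submodule.span_le.mpr ?_)
  · simpa [LinearMap.mem_ker.mp ha] using
      sub_ofGroupAlgebras_toGroupAlgebras_mem (hA := hA) hC hS a
  · rintro _ ⟨x, y, f, hf, rfl⟩
    exact toGroupAlgebras_basis_of_ne hC f (hC.ne_of_not_isIso f hf)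

end CategoryAlgebraData

theorem isSemisimpleRing_pi_monoidAlgebra_aut {k : Type*} [Field k] {C : Type*} [Category C]
    [Finite C] [∀ x y : C, Finite (x ⟶ y)] (hord : ∀ x : C, (Nat.card (Aut x) : k) ≠ 0) :
    IsSemisimpleRing (∀ x : C, MonoidAlgebra k (Aut x)) := by
  have (x : C) : Finite (Aut x) := .of_injective _ fun (a b : Aut x) h => Iso.ext h
  have (x : C) : NeZero (Nat.card (Aut x) : k) := ⟨hord x⟩
  infer_instance

theorem Ideal.jacobson_bot_le_ker {R S : Type*} [Ring R] [Ring S] [IsSemisimpleRing S]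
    (f : R →+* S) (hf : Function.Surjective f) : jacobson (⊥ : Ideal R) ≤ RingHom.ker f := by
  have : RingHomSurjective f := ⟨hf⟩
  have := Ring.le_comap_jacobson f
  rwa [IsSemisimpleRing.jacobson_eq_bot (R := S), ← RingHom.ker_eq_comap_bot,
    ← jacobson_bot] at this

open CategoryAlgebraData

/-- For a skeletal finite EI category `C` with all automorphism group orders invertible in
`k`, the Jacobson radical of `kC` is the span of the non-isomorphisms, and
`kC / rad(kC)` is isomorphic to the product of the group algebras `k Aut_C(x)`. -/
theorem stmt6 {k : Type*} [Field k] {C : Type*} [Category C] [Fintype C]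
    [∀ x y : C, Finite (x ⟶ y)]
    (hEI : ∀ (x : C) (f : x ⟶ x), IsIso f)
    (hskel : ∀ x y : C, (x ≅ y) → x = y)
    (hord : ∀ x : C, (Nat.card (Aut x) : k) ≠ 0)
    {A : Type*} [Ring A] [Algebra k A] (hA : CategoryAlgebraData k C A)
    (Λ : Submodule k A)
    (hΛ : Λ = Submodule.span k
      {a : A | ∃ (x y : C) (f : x ⟶ y), ¬ IsIso f ∧ a = hA.basis ⟨x, y, f⟩}) :
    ((Ideal.jacobson (⊥ : Ideal A) : Ideal A) : Set A) = (Λ : Set A) ∧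
    ∃ φ : A →ₐ[k] (∀ x : C, MonoidAlgebra k (Aut x)),
      Function.Surjective φ ∧ (RingHom.ker (φ : A →+* ∀ x : C, MonoidAlgebra k (Aut x)) : Set A) = (Λ : Set A) := by
  have hS : Skeletal C := fun x y ⟨e⟩ => hskel x y e
  have := isSemisimpleRing_pi_monoidAlgebra_aut hord
  let φ := hA.toGroupAlgebrasAlgHom hEI hS
  have hsurj : Function.Surjective φ := toGroupAlgebras_surjective hEI
  have hker : (RingHom.ker (φ : A →+* ∀ x : C, MonoidAlgebra k (Aut x)) : Set A) = Λ := by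
    rw [hΛ]
    exact congrArg (fun s : Submodule k A => (s : Set A)) (ker_toGroupAlgebras (hA := hA) hEI hS)
  refine ⟨subset_antisymm ?_ ?_, φ, hsurj, hker⟩
  · exact hker ▸ Ideal.jacobson_bot_le_ker _ hsurj
  · exact hΛ ▸ nonIsoSpan_le_jacobson hEI
end

section
/- Let C be a skeletal finite EI category, k a field in which all automorphism group orders are invertible, and let Λ = rad(kC) be the span of non-isomorphisms. Then rad²(kC) = Λ² is spanned by the morphisms that can be written as a composite of two non-isomorphisms, and Λ/Λ² has as a basis the images of the unfactorizable morphisms of C. -/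
open CategoryTheory
open scoped Classical

/-! Multiplying basis elements composes morphisms, so `Λ * Λ` is spanned by the basis
elements of composites of two non-isomorphisms. A non-isomorphism is either such a composite
or unfactorizable, and never both, so modulo the span of the composites the unfactorizable
basis elements stay independent and span the image of `Λ`. -/

section QuotientBySpan

variable {ι R M : Type*} [Ring R] [AddCommGroup M] [Module R M]

theorem Module.Basis.linearIndependent_mkQ_span_image (b : Module.Basis ι R M) {s t : Set ι}
    (hst : Disjoint s t) :
    LinearIndependent R (fun i : s => (Submodule.span R (b '' t)).mkQ (b i)) := by
  refine (b.linearIndependent.comp _ Subtype.val_injective).map ?_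
  rw [Submodule.ker_mkQ, Set.range_comp, Subtype.range_coe]
  exact b.linearIndependent.disjoint_span_image hst

theorem Submodule.span_range_mkQ_span_image (v : ι → M) {s t u : Set ι} (hsu : s ⊆ u)
    (hu : u ⊆ s ∪ t) :
    Submodule.span R (Set.range fun i : s => (Submodule.span R (v '' t)).mkQ (v i)) =
      (Submodule.span R (v '' u)).map (Submodule.span R (v '' t)).mkQ := by
  apply le_antisymm
  · rw [Submodule.span_le]
    rintro _ ⟨i, rfl⟩
    exact Submodule.mem_map_of_mem (Submodule.subset_span ⟨i, hsu i.2, rfl⟩)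
  · rw [Submodule.map_span, Submodule.span_le]
    rintro _ ⟨_, ⟨i, hi, rfl⟩, rfl⟩
    rcases hu hi with his | hit
    · exact Submodule.subset_span ⟨⟨i, his⟩, rfl⟩
    · have hvi : v i ∈ Submodule.span R (v '' t) := Submodule.subset_span ⟨i, hit, rfl⟩
      rw [Submodule.mkQ_apply, (Submodule.Quotient.mk_eq_zero _).2 hvi]
      exact Submodule.zero_mem _

end QuotientBySpan

section Morphisms

variable (C : Type*) [Category C]

def nonIsoMorphisms : Set (Σ x y : C, x ⟶ y) := {i | ¬ IsIso i.2.2}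

def nonIsoComposites : Set (Σ x y : C, x ⟶ y) :=
  {i | ∃ (x y z : C) (f : x ⟶ y) (g : y ⟶ z), ¬ IsIso f ∧ ¬ IsIso g ∧ i = ⟨x, z, f ≫ g⟩}

def unfactorizableMorphisms : Set (Σ x y : C, x ⟶ y) := {i | Unfactorizable i.2.2}

variable {C}

theorem unfactorizableMorphisms_subset_nonIsoMorphisms :
    unfactorizableMorphisms C ⊆ nonIsoMorphisms C :=
  fun _ hi => hi.1

theorem disjoint_unfactorizableMorphisms_nonIsoComposites :
    Disjoint (unfactorizableMorphisms C) (nonIsoComposites C) := by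
  rw [Set.disjoint_left]
  rintro _ hi ⟨x, y, z, f, g, hf, hg, rfl⟩
  rcases hi.2 y f g rfl with h | h
  exacts [hf h, hg h]

theorem nonIsoMorphisms_subset_union :
    nonIsoMorphisms C ⊆ unfactorizableMorphisms C ∪ nonIsoComposites C := by
  rintro ⟨x, z, h⟩ hh
  by_cases hu : Unfactorizable h
  · exact Or.inl hu
  · simp only [Unfactorizable, not_and, not_forall, not_or] at hu
    obtain ⟨y, f, g, rfl, hf, hg⟩ := hu hh
    exact Or.inr ⟨x, y, z, f, g, hf, hg, rfl⟩

end Morphisms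

namespace CategoryAlgebraData

variable {k : Type*} [Field k] {C : Type*} [Category C] [Fintype C]
  {A : Type*} [Ring A] [Algebra k A] (hA : CategoryAlgebraData k C A)

theorem basis_mul_basis_comp {x y z : C} (f : x ⟶ y) (g : y ⟶ z) :
    hA.basis ⟨y, z, g⟩ * hA.basis ⟨x, y, f⟩ = hA.basis ⟨x, z, f ≫ g⟩ := by
  simp [hA.basis_mul_basis]

theorem image_basis_nonIsoMorphisms :
    hA.basis '' nonIsoMorphisms C =
      {a : A | ∃ (x y : C) (f : x ⟶ y), ¬ IsIso f ∧ a = hA.basis ⟨x, y, f⟩} := by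
  ext a
  constructor
  · rintro ⟨⟨x, y, f⟩, hf, rfl⟩
    exact ⟨x, y, f, hf, rfl⟩
  · rintro ⟨x, y, f, hf, rfl⟩
    exact ⟨⟨x, y, f⟩, hf, rfl⟩

theorem image_basis_nonIsoComposites :
    hA.basis '' nonIsoComposites C =
      {a : A | ∃ (x y z : C) (f : x ⟶ y) (g : y ⟶ z),
        ¬ IsIso f ∧ ¬ IsIso g ∧ a = hA.basis ⟨x, z, f ≫ g⟩} := by
  ext a
  constructor
  · rintro ⟨_, ⟨x, y, z, f, g, hf, hg, rfl⟩, rfl⟩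
    exact ⟨x, y, z, f, g, hf, hg, rfl⟩
  · rintro ⟨x, y, z, f, g, hf, hg, rfl⟩
    exact ⟨_, ⟨x, y, z, f, g, hf, hg, rfl⟩, rfl⟩

theorem span_nonIsoMorphisms_mul_self :
    Submodule.span k (hA.basis '' nonIsoMorphisms C) *
        Submodule.span k (hA.basis '' nonIsoMorphisms C) =
      Submodule.span k (hA.basis '' nonIsoComposites C) := by
  rw [Submodule.span_mul_span]
  apply le_antisymm
  · rw [Submodule.span_le]
    rintro _ ⟨_, ⟨⟨x₁, y₁, f⟩, hf, rfl⟩, _, ⟨⟨x₂, y₂, g⟩, hg, rfl⟩, rfl⟩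
    show hA.basis _ * hA.basis _ ∈ _
    rw [hA.basis_mul_basis]
    split_ifs with h
    · subst h
      exact Submodule.subset_span ⟨_, ⟨x₂, y₂, y₁, g, f, hg, hf, rfl⟩, by simp⟩
    · exact Submodule.zero_mem _
  · rw [Submodule.span_le]
    rintro _ ⟨_, ⟨x, y, z, f, g, hf, hg, rfl⟩, rfl⟩
    exact Submodule.subset_span
      ⟨_, ⟨⟨y, z, g⟩, hg, rfl⟩, _, ⟨⟨x, y, f⟩, hf, rfl⟩, hA.basis_mul_basis_comp f g⟩

end CategoryAlgebraData

/-- Let `Λ = rad(kC)` be the span of the non-isomorphisms in the category algebra of a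
skeletal finite EI category with all automorphism group orders invertible in `k`.  Then
`Λ² = rad²(kC)` is spanned by the composites of two non-isomorphisms, and `Λ/Λ²` has as a
basis the images of the unfactorizable morphisms: the images of the unfactorizable
morphisms in `A/Λ²` are linearly independent and span the image of `Λ`. -/
theorem stmt7 {k : Type*} [Field k] {C : Type*} [Category C] [Fintype C]
    [∀ x y : C, Finite (x ⟶ y)]
    (hEI : ∀ (x : C) (f : x ⟶ x), IsIso f)
    (hskel : ∀ x y : C, (x ≅ y) → x = y)
    (hord : ∀ x : C, (Nat.card (Aut x) : k) ≠ 0)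
    {A : Type*} [Ring A] [Algebra k A] (hA : CategoryAlgebraData k C A)
    (Λ : Submodule k A)
    (hΛ : Λ = Submodule.span k
      {a : A | ∃ (x y : C) (f : x ⟶ y), ¬ IsIso f ∧ a = hA.basis ⟨x, y, f⟩}) :
    Λ * Λ = Submodule.span k
      {a : A | ∃ (x y z : C) (f : x ⟶ y) (g : y ⟶ z),
        ¬ IsIso f ∧ ¬ IsIso g ∧ a = hA.basis ⟨x, z, f ≫ g⟩} ∧
    LinearIndependent k
      (fun u : {i : Σ x y : C, x ⟶ y // Unfactorizable i.2.2} =>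
        Submodule.mkQ (Λ * Λ) (hA.basis u.1)) ∧
    Submodule.span k
      (Set.range (fun u : {i : Σ x y : C, x ⟶ y // Unfactorizable i.2.2} =>
        Submodule.mkQ (Λ * Λ) (hA.basis u.1))) = Λ.map (Submodule.mkQ (Λ * Λ)) := by
  rw [← hA.image_basis_nonIsoMorphisms] at hΛ
  have hΛ₂ : Λ * Λ = Submodule.span k (hA.basis '' nonIsoComposites C) := by
    rw [hΛ, hA.span_nonIsoMorphisms_mul_self]
  refine ⟨hΛ₂.trans (by rw [hA.image_basis_nonIsoComposites]), ?_, ?_⟩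
  · rw [hΛ₂]
    exact hA.basis.linearIndependent_mkQ_span_image
      disjoint_unfactorizableMorphisms_nonIsoComposites
  · rw [hΛ₂, hΛ]
    exact Submodule.span_range_mkQ_span_image _
      unfactorizableMorphisms_subset_nonIsoMorphisms nonIsoMorphisms_subset_union
end

section
/- Let C be a finite EI category such that the category algebra kC is hereditary. Then for every object x of C, the order of Aut_C(x) is invertible in k. -/
open CategoryTheory
open scoped Classical

/-!
Let `N = ∑_{g ∈ Aut x} g ∈ kC`. Since the left ideal `kC · N` is projective, `r ↦ r * N` splits:
some `c` has `c * N = N` and is killed by every `r` with `r * N = 0`. As `(g - 1ₓ) * N = 0`, this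
gives `g * c = 1ₓ * c` for all `g`, so `N * c = |Aut x| • (1ₓ * c) = 0` if `|Aut x| = 0` in `k`.
But the coefficient of `1ₓ` of both `a * N` and `N * a` is `∑_g a_{g⁻¹}`, so comparing it on
`c * N = N` and `N * c = 0` yields `1 = 0`.
-/

/-- `c` is the image of `a` under a section of the surjection `r ↦ r * a` onto `A a`. -/
theorem Ideal.exists_section_of_projective_span_singleton {A : Type*} [Ring A] (a : A)
    [Module.Projective A (Ideal.span {a})] :
    ∃ c : A, c * a = a ∧ ∀ r : A, r * a = 0 → r * c = 0 := by
  have ha : a ∈ Ideal.span {a} := Ideal.subset_span rfl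
  let π : A →ₗ[A] Ideal.span {a} :=
    (LinearMap.toSpanSingleton A A a).codRestrict _ fun r => Ideal.mul_mem_left _ r ha
  have hπ : Function.Surjective π := by
    rintro ⟨z, hz⟩
    obtain ⟨r, rfl⟩ := Submodule.mem_span_singleton.mp hz
    exact ⟨r, rfl⟩
  obtain ⟨s, hs⟩ := Module.projective_lifting_property π LinearMap.id hπ
  refine ⟨s ⟨a, ha⟩, congrArg Subtype.val (LinearMap.congr_fun hs ⟨a, ha⟩), fun r hr => ?_⟩
  have hr' : r • (⟨a, ha⟩ : Ideal.span {a}) = 0 := Subtype.ext hr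
  rw [← smul_eq_mul, ← map_smul, hr', map_zero]

theorem CategoryTheory.Aut.natCard_eq_of_forall_isIso {C : Type*} [Category C] {x : C}
    (h : ∀ f : x ⟶ x, IsIso f) : Nat.card (Aut x) = Nat.card (x ⟶ x) :=
  Nat.card_congr <| Equiv.ofBijective Iso.hom
    ⟨fun _ _ he => Iso.ext he, fun f => ⟨@asIso _ _ _ _ f (h f), rfl⟩⟩

namespace CategoryAlgebraData

variable {k : Type*} [Field k] {C : Type*} [Category C] [Fintype C] {A : Type*} [Ring A]
  [Algebra k A] (hA : CategoryAlgebraData k C A) {x : C}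

theorem basis_mul_basis_endo (f g : x ⟶ x) :
    hA.basis ⟨x, x, f⟩ * hA.basis ⟨x, x, g⟩ = hA.basis ⟨x, x, g ≫ f⟩ := by
  simp [hA.basis_mul_basis]

theorem coord_id_basis_mul (g : x ⟶ x) [IsIso g] (a : A) :
    hA.basis.coord ⟨x, x, 𝟙 x⟩ (hA.basis ⟨x, x, g⟩ * a) = hA.basis.coord ⟨x, x, inv g⟩ a := by
  refine LinearMap.congr_fun (f := (hA.basis.coord ⟨x, x, 𝟙 x⟩).comp
    (LinearMap.mulLeft k (hA.basis ⟨x, x, g⟩))) (hA.basis.ext fun ⟨w, y, h⟩ => ?_) a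
  simp only [LinearMap.comp_apply, LinearMap.mulLeft_apply, Module.Basis.coord_apply,
    hA.basis_mul_basis]
  split_ifs with hy
  · subst y
    simp only [eqToHom_refl, Category.id_comp, Module.Basis.repr_self, Finsupp.single_apply]
    obtain rfl | hw := eq_or_ne w x
    · simp [comp_hom_eq_id]
    · simp [hw]
  · simp only [map_zero, Finsupp.coe_zero, Pi.zero_apply, Module.Basis.repr_self]
    exact (Finsupp.single_eq_of_ne fun he => hy (congrArg (·.2.1) he).symm).symm

theorem coord_id_mul_basis (g : x ⟶ x) [IsIso g] (a : A) :
    hA.basis.coord ⟨x, x, 𝟙 x⟩ (a * hA.basis ⟨x, x, g⟩) = hA.basis.coord ⟨x, x, inv g⟩ a := by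
  refine LinearMap.congr_fun (f := (hA.basis.coord ⟨x, x, 𝟙 x⟩).comp
    (LinearMap.mulRight k (hA.basis ⟨x, x, g⟩))) (hA.basis.ext fun ⟨w, y, h⟩ => ?_) a
  simp only [LinearMap.comp_apply, LinearMap.mulRight_apply, Module.Basis.coord_apply,
    hA.basis_mul_basis]
  split_ifs with hw
  · subst w
    simp only [eqToHom_refl, Category.id_comp, Module.Basis.repr_self, Finsupp.single_apply]
    obtain rfl | hy := eq_or_ne y x
    · simp [hom_comp_eq_id]
    · simp [hy]
  · simp only [map_zero, Finsupp.coe_zero, Pi.zero_apply, Module.Basis.repr_self]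
    exact (Finsupp.single_eq_of_ne fun he => hw (congrArg (·.1) he)).symm

variable (x) [Fintype (x ⟶ x)]

noncomputable def endSum : A := ∑ f : x ⟶ x, hA.basis ⟨x, x, f⟩

theorem coord_id_endSum : hA.basis.coord ⟨x, x, 𝟙 x⟩ (hA.endSum x) = 1 := by
  simp [endSum, Finsupp.single_apply]

variable {x}

theorem basis_mul_endSum (g : x ⟶ x) [IsIso g] :
    hA.basis ⟨x, x, g⟩ * hA.endSum x = hA.endSum x := by
  simp only [endSum, Finset.mul_sum, basis_mul_basis_endo]
  exact (Equiv.sum_comp ⟨(· ≫ g), (· ≫ inv g), fun f => by simp, fun f => by simp⟩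
    fun f => hA.basis ⟨x, x, f⟩)

theorem coord_id_mul_endSum_comm (hEI : ∀ f : x ⟶ x, IsIso f) (a : A) :
    hA.basis.coord ⟨x, x, 𝟙 x⟩ (a * hA.endSum x) =
      hA.basis.coord ⟨x, x, 𝟙 x⟩ (hA.endSum x * a) := by
  simp only [endSum, Finset.mul_sum, Finset.sum_mul, map_sum]
  refine Finset.sum_congr rfl fun f _ => ?_
  have := hEI f
  rw [coord_id_mul_basis, coord_id_basis_mul]

end CategoryAlgebraData

/-- If the category algebra `kC` of a skeletal finite EI category over an algebraically
closed field `k` is hereditary (every left ideal is projective), then for every object `x`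
the order of `Aut_C(x)` is invertible in `k`. -/
theorem stmt12 {k : Type*} [Field k] [IsAlgClosed k] {C : Type*} [Category C] [Fintype C]
    [∀ x y : C, Finite (x ⟶ y)]
    (hEI : ∀ (x : C) (f : x ⟶ x), IsIso f)
    (hskel : ∀ x y : C, (x ≅ y) → x = y)
    {A : Type*} [Ring A] [Algebra k A] (hA : CategoryAlgebraData k C A)
    (hher : ∀ I : Ideal A, Module.Projective A I) :
    ∀ x : C, (Nat.card (Aut x) : k) ≠ 0 := by
  intro x hx
  have := Fintype.ofFinite (x ⟶ x)
  set N := hA.endSum x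
  have := hher (Ideal.span {N})
  obtain ⟨c, hcN, hann⟩ := Ideal.exists_section_of_projective_span_singleton N
  have hgc (g : x ⟶ x) : hA.basis ⟨x, x, g⟩ * c = hA.basis ⟨x, x, 𝟙 x⟩ * c := by
    have := hEI x g
    rw [← sub_eq_zero, ← sub_mul]
    exact hann _ (by rw [sub_mul, hA.basis_mul_endSum, hA.basis_mul_endSum, sub_self])
  have hNc : N * c = 0 := by
    rw [Aut.natCard_eq_of_forall_isIso (hEI x), Nat.card_eq_fintype_card] at hx
    simp only [N, CategoryAlgebraData.endSum, Finset.sum_mul, hgc, Finset.sum_const,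
      Finset.card_univ, ← Nat.cast_smul_eq_nsmul k, hx, zero_smul]
  have hcoord := hA.coord_id_mul_endSum_comm (hEI x) c
  rw [hcN, hNc, hA.coord_id_endSum, map_zero] at hcoord
  exact one_ne_zero hcoord
end

section
/- Let G, H be finite groups with orders invertible in the field k, X an (H,G)-biset, α ∈ X, with G₀, G₁ ≤ G and H₀, H₁ ≤ H the stabilizer subgroups as in the biset lemma, and identify G₁/G₀ with H₁/H₀ via the canonical isomorphism. Suppose R is a functor assigning a kG-module M = R(x), a kH-module N = R(y), and to each element h·α·g of the biset the linear map R(h)∘φ∘R(g) for a fixed linear map φ = R(α) : M → N, compatibly with composition. If U is a simple kG₁-submodule direct summand of M↓_{G₁} with φ(U) ≠ 0, then: (1) U is a direct summand of k↑_{G₀}^{G₁}; (2) the restriction φ|_U : U → φ(U) is an isomorphism of k(G₁/G₀)-modules under the identification; and (3) φ(U) is a simple direct summand of k↑_{H₀}^{H₁}. -/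
/-!
Every `g ∈ G₁` is matched by some `h ∈ H₁` with `φ ∘ ρ g = σ h ∘ φ`, so the kernel of `φ` on `U`,
and more generally the preimage in `U` of any `H₁`-invariant subspace of `φ(U)`, is
`G₁`-invariant; simplicity of `U` makes `φ` injective on `U` and `φ(U)` simple. Taking `h = 1`
shows that `φ ∘ ρ g = φ` for `g ∈ G₀`, so by injectivity `G₀` acts trivially on `U`; dually `H₀`
acts trivially on `φ(U)`. A simple module `U` on which `Γ₀` acts trivially embeds into
`k[Γ/Γ₀]` (Frobenius reciprocity): choose a functional `λ` with `λ u₀ = 1` for some `u₀ ∈ U` and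
send `m` to `gΓ₀ ↦ λ (g⁻¹ m)`; its kernel on `U` is an invariant subspace missing `u₀`, hence zero.
-/

open MulOpposite

section BisetStabilizers

variable {G H X : Type*} [Group G] [Group H] [MulAction H X] [MulAction Gᵐᵒᵖ X]

/-- `G₀ = Stab_G(α) = {g : α·g = α}` as a subgroup of `G`. -/
def bisetG0 (α : X) : Subgroup G where
  carrier := {g : G | op g • α = α}
  one_mem' := by simp
  mul_mem' := by
    intro a b ha hb
    simp only [Set.mem_setOf_eq] at *
    rw [show op (a * b) = op b * op a from rfl, mul_smul, ha, hb]
  inv_mem' := by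
    intro a ha
    simp only [Set.mem_setOf_eq] at *
    have h1 : op a⁻¹ • (op a • α) = α := by
      rw [← mul_smul, ← op_mul, mul_inv_cancel, op_one, one_smul]
    rw [ha] at h1
    exact h1

/-- `H₀ = Stab_H(α) = {h : h·α = α}` as a subgroup of `H`. -/
def bisetH0 (α : X) : Subgroup H := MulAction.stabilizer H α

/-- `G₁ = {g : ∃ h, α·g = h·α}` as a subgroup of `G`. -/
def bisetG1 (hcomm : ∀ (h : H) (g : Gᵐᵒᵖ) (x : X), g • (h • x) = h • (g • x))
    (α : X) : Subgroup G where
  carrier := {g : G | ∃ h : H, op g • α = h • α}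
  one_mem' := ⟨1, by simp⟩
  mul_mem' := by
    rintro a b ⟨ha, hha⟩ ⟨hb, hhb⟩
    refine ⟨ha * hb, ?_⟩
    rw [show op (a * b) = op b * op a from rfl, mul_smul, hha, hcomm, hhb, mul_smul]
  inv_mem' := by
    rintro a ⟨h, hh⟩
    refine ⟨h⁻¹, ?_⟩
    have h1 : op a⁻¹ • (op a • α) = α := by
      rw [← mul_smul, ← op_mul, mul_inv_cancel, op_one, one_smul]
    have h2 : h • (op a⁻¹ • α) = α := by rw [← hcomm, ← hh]; exact h1
    calc op a⁻¹ • α = h⁻¹ • (h • (op a⁻¹ • α)) := by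
          rw [← mul_smul, inv_mul_cancel, one_smul]
      _ = h⁻¹ • α := by rw [h2]

/-- `H₁ = {h : ∃ g, h·α = α·g}` as a subgroup of `H`. -/
def bisetH1 (hcomm : ∀ (h : H) (g : Gᵐᵒᵖ) (x : X), g • (h • x) = h • (g • x))
    (α : X) : Subgroup H where
  carrier := {h : H | ∃ g : G, h • α = op g • α}
  one_mem' := ⟨1, by simp⟩
  mul_mem' := by
    rintro a b ⟨ga, hga⟩ ⟨gb, hgb⟩
    refine ⟨ga * gb, ?_⟩
    rw [mul_smul, hgb, ← hcomm, hga, ← mul_smul, ← op_mul]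
  inv_mem' := by
    rintro a ⟨g, hg⟩
    refine ⟨g⁻¹, ?_⟩
    have h1 : a⁻¹ • (a • α) = α := by rw [← mul_smul, inv_mul_cancel, one_smul]
    have h2 : op g • (a⁻¹ • α) = α := by rw [hcomm, ← hg]; exact h1
    calc a⁻¹ • α = op g⁻¹ • (op g • (a⁻¹ • α)) := by
          rw [← mul_smul, ← op_mul, mul_inv_cancel, op_one, one_smul]
      _ = op g⁻¹ • α := by rw [h2]

end BisetStabilizers

section InvariantSubmodules

variable {k ι κ M N : Type*} [Semiring k] [AddCommMonoid M] [Module k M]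
  [AddCommMonoid N] [Module k N] {ρ : ι → M →ₗ[k] M} {σ : κ → N →ₗ[k] N}
  {U : Submodule k M} {f : M →ₗ[k] N}

theorem disjoint_ker_of_simple (hUinv : ∀ i, U.map (ρ i) ≤ U)
    (hU : ∀ W ≤ U, (∀ i, W.map (ρ i) ≤ W) → W = ⊥ ∨ W = U)
    (hker : ∀ i, ∀ u ∈ U, f u = 0 → f (ρ i u) = 0) (hf : U.map f ≠ ⊥) :
    Disjoint U (LinearMap.ker f) := by
  have hinv : ∀ i, (U ⊓ LinearMap.ker f).map (ρ i) ≤ U ⊓ LinearMap.ker f := by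
    rintro i _ ⟨u, ⟨hu, hfu⟩, rfl⟩
    exact ⟨hUinv i ⟨u, hu, rfl⟩, hker i u hu hfu⟩
  rcases hU _ inf_le_left hinv with h | h
  · exact disjoint_iff.mpr h
  · exact absurd (LinearMap.le_ker_iff_map.mp (inf_eq_left.mp h)) hf

theorem map_simple_of_forall_exists_apply_eq (hUinv : ∀ i, U.map (ρ i) ≤ U)
    (hU : ∀ W ≤ U, (∀ i, W.map (ρ i) ≤ W) → W = ⊥ ∨ W = U)
    (hfwd : ∀ i, ∃ j, ∀ u ∈ U, f (ρ i u) = σ j (f u)) :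
    ∀ W ≤ U.map f, (∀ j, W.map (σ j) ≤ W) → W = ⊥ ∨ W = U.map f := by
  intro W hWU hW
  have hinv : ∀ i, (U ⊓ W.comap f).map (ρ i) ≤ U ⊓ W.comap f := by
    rintro i _ ⟨u, ⟨hu, hfu⟩, rfl⟩
    obtain ⟨j, hj⟩ := hfwd i
    refine ⟨hUinv i ⟨u, hu, rfl⟩, ?_⟩
    change f (ρ i u) ∈ W
    rw [hj u hu]
    exact hW j ⟨f u, hfu, rfl⟩
  have hmap : (U ⊓ W.comap f).map f = W := by
    rw [← Submodule.map_inf_eq_map_inf_comap, inf_eq_right.mpr hWU]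
  rcases hU _ inf_le_left hinv with h | h
  · left
    rw [← hmap, h, Submodule.map_bot]
  · right
    rw [← hmap, h]

theorem map_invariant_of_forall_exists_apply_eq (hUinv : ∀ i, U.map (ρ i) ≤ U)
    (hbwd : ∀ j, ∃ i, ∀ u ∈ U, f (ρ i u) = σ j (f u)) :
    ∀ j, ∀ v ∈ U.map f, σ j v ∈ U.map f := by
  rintro j _ ⟨u, hu, rfl⟩
  obtain ⟨i, hi⟩ := hbwd j
  exact ⟨ρ i u, hUinv i ⟨u, hu, rfl⟩, hi u hu⟩

end InvariantSubmodules

theorem apply_eq_self_of_disjoint_ker {k M N : Type*} [Ring k] [AddCommGroup M] [Module k M]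
    [AddCommGroup N] [Module k N] {U : Submodule k M} {f : M →ₗ[k] N} {T : M →ₗ[k] M}
    (hdisj : Disjoint U (LinearMap.ker f)) (hT : U.map T ≤ U) (hfT : ∀ u ∈ U, f (T u) = f u)
    {u : M} (hu : u ∈ U) : T u = u := by
  refine sub_eq_zero.mp (LinearMap.disjoint_ker.mp hdisj _ (U.sub_mem (hT ⟨u, hu, rfl⟩) hu) ?_)
  rw [map_sub, hfT u hu, sub_self]

section PermutationModule

variable {k Γ M : Type*} [CommSemiring k] [Group Γ] [AddCommMonoid M] [Module k M]
  {ρ : Representation k Γ M} {Γ₀ : Subgroup Γ} {U : Submodule k M}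

theorem apply_inv_eq_of_mk_eq (hUinv : ∀ g, U.map (ρ g) ≤ U)
    (hfix : ∀ g ∈ Γ₀, ∀ u ∈ U, ρ g u = u) {a b : Γ} (hab : (a : Γ ⧸ Γ₀) = b) {u : M}
    (hu : u ∈ U) : ρ a⁻¹ u = ρ b⁻¹ u := by
  have hba : b⁻¹ * a ∈ Γ₀ := QuotientGroup.eq.mp hab.symm
  calc ρ a⁻¹ u = ρ (b⁻¹ * a) (ρ a⁻¹ u) := (hfix _ hba _ (hUinv _ ⟨u, hu, rfl⟩)).symm
    _ = ρ b⁻¹ u := by rw [← Module.End.mul_apply, ← map_mul, mul_inv_cancel_right]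

variable [Finite (Γ ⧸ Γ₀)]

variable (ρ Γ₀) in
noncomputable def cosetCoeffMap (lam : M →ₗ[k] k) : M →ₗ[k] ((Γ ⧸ Γ₀) →₀ k) :=
  (Finsupp.linearEquivFunOnFinite k k (Γ ⧸ Γ₀)).symm.toLinearMap ∘ₗ
    LinearMap.pi fun q => lam ∘ₗ ρ q.out⁻¹

theorem cosetCoeffMap_apply (lam : M →ₗ[k] k) (m : M) (q : Γ ⧸ Γ₀) :
    cosetCoeffMap ρ Γ₀ lam m q = lam (ρ q.out⁻¹ m) :=
  rfl

theorem cosetCoeffMap_apply_mk_of_mem (hUinv : ∀ g, U.map (ρ g) ≤ U)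
    (hfix : ∀ g ∈ Γ₀, ∀ u ∈ U, ρ g u = u) (lam : M →ₗ[k] k) (a : Γ) {u : M} (hu : u ∈ U) :
    cosetCoeffMap ρ Γ₀ lam u a = lam (ρ a⁻¹ u) := by
  rw [cosetCoeffMap_apply, apply_inv_eq_of_mk_eq hUinv hfix (Quotient.out_eq' _) hu]

theorem cosetCoeffMap_apply_of_mem (hUinv : ∀ g, U.map (ρ g) ≤ U)
    (hfix : ∀ g ∈ Γ₀, ∀ u ∈ U, ρ g u = u) (lam : M →ₗ[k] k) (g : Γ) {u : M} (hu : u ∈ U)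
    (q : Γ ⧸ Γ₀) : cosetCoeffMap ρ Γ₀ lam (ρ g u) q = cosetCoeffMap ρ Γ₀ lam u (g⁻¹ • q) := by
  induction q using QuotientGroup.induction_on with
  | H a =>
    rw [cosetCoeffMap_apply_mk_of_mem hUinv hfix lam a (hUinv g ⟨u, hu, rfl⟩),
      MulAction.Quotient.smul_mk, cosetCoeffMap_apply_mk_of_mem hUinv hfix lam _ hu,
      ← Module.End.mul_apply, ← map_mul, smul_eq_mul, mul_inv_rev, inv_inv]

end PermutationModule

theorem exists_leftInverse_intertwining_ofMulAction_quotient {k Γ M : Type*} [Field k]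
    [Group Γ] [AddCommGroup M] [Module k M] {ρ : Representation k Γ M} {Γ₀ : Subgroup Γ}
    [Finite (Γ ⧸ Γ₀)] {U : Submodule k M} (hUinv : ∀ g, U.map (ρ g) ≤ U)
    (hfix : ∀ g ∈ Γ₀, ∀ u ∈ U, ρ g u = u)
    (hU : ∀ W ≤ U, (∀ g, W.map (ρ g) ≤ W) → W = ⊥ ∨ W = U) (hUne : U ≠ ⊥) :
    ∃ (ι : U →ₗ[k] ((Γ ⧸ Γ₀) →₀ k)) (pr : ((Γ ⧸ Γ₀) →₀ k) →ₗ[k] U),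
      (∀ (g : Γ) (u : U), ι ((ρ g).restrict (fun m hm => hUinv g ⟨m, hm, rfl⟩) u) =
        MonoidAlgebra.coeffLinearEquiv k (Representation.ofMulAction k Γ (Γ ⧸ Γ₀) g
          ((MonoidAlgebra.coeffLinearEquiv k).symm (ι u)))) ∧
      pr ∘ₗ ι = LinearMap.id := by
  obtain ⟨u₀, hu₀U, hu₀⟩ := Submodule.exists_mem_ne_zero_of_ne_bot hUne
  obtain ⟨lam, hlam⟩ := Module.Projective.exists_dual_eq_one k hu₀
  set F := cosetCoeffMap ρ Γ₀ lam
  have hF := cosetCoeffMap_apply_of_mem hUinv hfix lam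
  have hFu₀ : F u₀ ≠ 0 := fun h => by
    have h1 := DFunLike.congr_fun h ((1 : Γ) : Γ ⧸ Γ₀)
    rw [cosetCoeffMap_apply_mk_of_mem hUinv hfix lam 1 hu₀U, inv_one, map_one,
      Module.End.one_apply, hlam] at h1
    exact one_ne_zero h1
  have hdisj : Disjoint U (LinearMap.ker F) := by
    refine disjoint_ker_of_simple hUinv hU (fun g u hu h0 => ?_) fun h => hFu₀ ?_
    · ext q
      rw [hF g hu, h0]
      rfl
    · exact LinearMap.le_ker_iff_map.mpr h hu₀U
  obtain ⟨pr, hpr⟩ := LinearMap.exists_leftInverse_of_injective (F ∘ₗ U.subtype) (by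
    rw [LinearMap.ker_eq_bot']
    exact fun u hu => Subtype.ext (LinearMap.disjoint_ker.mp hdisj u u.2 hu))
  refine ⟨F ∘ₗ U.subtype, pr, fun g u => ?_, hpr⟩
  ext q
  simpa using hF g u.2 q

section BisetCorrespondence

variable {G H X : Type*} [Group G] [Group H] [MulAction H X] [MulAction Gᵐᵒᵖ X]
  {hcomm : ∀ (h : H) (g : Gᵐᵒᵖ) (x : X), g • (h • x) = h • (g • x)} {α : X}

theorem exists_bisetH1_smul_eq (g : bisetG1 hcomm α) :
    ∃ h : bisetH1 hcomm α, op (g : G) • α = (h : H) • α := by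
  obtain ⟨h, hh⟩ := g.2
  exact ⟨⟨h, g, hh.symm⟩, hh⟩

theorem exists_bisetG1_smul_eq (h : bisetH1 hcomm α) :
    ∃ g : bisetG1 hcomm α, op (g : G) • α = (h : H) • α := by
  obtain ⟨g, hg⟩ := h.2
  exact ⟨⟨g, h, hg.symm⟩, hg.symm⟩

end BisetCorrespondence

theorem stmt15_general {k G H X M N : Type*} [Field k] [Group G] [Group H] [Fintype G] [Fintype H]
    [MulAction H X] [MulAction Gᵐᵒᵖ X]
    (hcomm : ∀ (h : H) (g : Gᵐᵒᵖ) (x : X), g • (h • x) = h • (g • x))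
    (α : X)
    [AddCommGroup M] [Module k M] [AddCommGroup N] [Module k N]
    (ρ : Representation k G M) (σ : Representation k H N) (φ : M →ₗ[k] N)
    (hcompat : ∀ (g : G) (h : H), op g • α = h • α → φ ∘ₗ ρ g = σ h ∘ₗ φ)
    (U : Submodule k M)
    (hUinv : ∀ g : bisetG1 hcomm α, U.map (ρ (g : G)) ≤ U)
    (hUne : U ≠ ⊥)
    (hUsimple : ∀ W ≤ U, (∀ g : bisetG1 hcomm α, W.map (ρ (g : G)) ≤ W) → W = ⊥ ∨ W = U)
    (hφU : U.map φ ≠ ⊥) :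
    -- (1) U is a direct summand of k[G₁/G₀] as a representation of G₁
    (∃ (ι : U →ₗ[k] ((bisetG1 hcomm α ⧸ (bisetG0 α).subgroupOf (bisetG1 hcomm α)) →₀ k))
        (pr : ((bisetG1 hcomm α ⧸ (bisetG0 α).subgroupOf (bisetG1 hcomm α)) →₀ k) →ₗ[k] U),
      (∀ (g : bisetG1 hcomm α) (u : U),
        ι ((ρ (g : G)).restrict (fun m hm => hUinv g ⟨m, hm, rfl⟩) u) =
          MonoidAlgebra.coeffLinearEquiv k (Representation.ofMulAction k (bisetG1 hcomm α)
            (bisetG1 hcomm α ⧸ (bisetG0 α).subgroupOf (bisetG1 hcomm α)) g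
              ((MonoidAlgebra.coeffLinearEquiv k).symm (ι u)))) ∧
      pr ∘ₗ ι = LinearMap.id) ∧
    -- (2) φ restricted to U is injective (an isomorphism onto φ(U)), compatibly with the
    -- identification G₁/G₀ ≅ H₁/H₀
    ((∀ u ∈ U, φ u = 0 → u = 0) ∧
      ∀ (g : G) (h : H), op g • α = h • α → ∀ u ∈ U, φ (ρ g u) = σ h (φ u)) ∧
    -- (3) φ(U) is an H₁-invariant simple submodule of N and a direct summand of k[H₁/H₀]
    (∃ hinv : ∀ h : bisetH1 hcomm α, ∀ v ∈ U.map φ, σ (h : H) v ∈ U.map φ,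
      (∀ W ≤ U.map φ, (∀ h : bisetH1 hcomm α, W.map (σ (h : H)) ≤ W) → W = ⊥ ∨ W = U.map φ) ∧
      ∃ (ι' : U.map φ →ₗ[k] ((bisetH1 hcomm α ⧸ (bisetH0 α).subgroupOf (bisetH1 hcomm α)) →₀ k))
        (pr' : ((bisetH1 hcomm α ⧸ (bisetH0 α).subgroupOf (bisetH1 hcomm α)) →₀ k) →ₗ[k] U.map φ),
        (∀ (h : bisetH1 hcomm α) (v : U.map φ),
          ι' ((σ (h : H)).restrict (fun n hn => hinv h n hn) v) =
            MonoidAlgebra.coeffLinearEquiv k (Representation.ofMulAction k (bisetH1 hcomm α)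
              (bisetH1 hcomm α ⧸ (bisetH0 α).subgroupOf (bisetH1 hcomm α)) h
                ((MonoidAlgebra.coeffLinearEquiv k).symm (ι' v)))) ∧
        pr' ∘ₗ ι' = LinearMap.id) := by
  have hcompat' : ∀ (g : G) (h : H), op g • α = h • α → ∀ u ∈ U, φ (ρ g u) = σ h (φ u) :=
    fun g h hgh u _ => LinearMap.congr_fun (hcompat g h hgh) u
  have hfwd : ∀ g : bisetG1 hcomm α, ∃ h : bisetH1 hcomm α, ∀ u ∈ U, φ (ρ g u) = σ h (φ u) :=
    fun g => (exists_bisetH1_smul_eq g).imp fun h hgh => hcompat' g h hgh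
  have hbwd : ∀ h : bisetH1 hcomm α, ∃ g : bisetG1 hcomm α, ∀ u ∈ U, φ (ρ g u) = σ h (φ u) :=
    fun h => (exists_bisetG1_smul_eq h).imp fun g hgh => hcompat' g h hgh
  have hinj : Disjoint U (LinearMap.ker φ) := by
    refine disjoint_ker_of_simple hUinv hUsimple (fun g u hu hu0 => ?_) hφU
    obtain ⟨h, hh⟩ := hfwd g
    rw [hh u hu, hu0, map_zero]
  have hfixG : ∀ g ∈ (bisetG0 α).subgroupOf (bisetG1 hcomm α), ∀ u ∈ U, ρ g u = u :=
    fun g hg _ => apply_eq_self_of_disjoint_ker hinj (hUinv g) fun u hu => by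
      rw [hcompat' g 1 ((one_smul H α).symm ▸ hg) u hu, map_one, Module.End.one_apply]
  have hfixH : ∀ h ∈ (bisetH0 α).subgroupOf (bisetH1 hcomm α), ∀ v ∈ U.map φ, σ h v = v := by
    rintro h hh _ ⟨u, hu, rfl⟩
    have h1 : op (1 : G) • α = (h : H) • α := by rw [op_one, one_smul]; exact hh.symm
    rw [← hcompat' 1 h h1 u hu, map_one, Module.End.one_apply]
  have hinvV := map_invariant_of_forall_exists_apply_eq hUinv hbwd
  have hVsimple := map_simple_of_forall_exists_apply_eq hUinv hUsimple hfwd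
  refine ⟨?_, ⟨LinearMap.disjoint_ker.mp hinj, hcompat'⟩, hinvV, hVsimple, ?_⟩
  · exact exists_leftInverse_intertwining_ofMulAction_quotient
      (ρ := ρ.comp (bisetG1 hcomm α).subtype) hUinv hfixG hUsimple hUne
  · exact exists_leftInverse_intertwining_ofMulAction_quotient
      (ρ := σ.comp (bisetH1 hcomm α).subtype)
      (fun h => Submodule.map_le_iff_le_comap.mpr (hinvV h)) hfixH hVsimple hφU

/-- Lemma 3.5 of the paper.  Let `X` be an `(H,G)`-biset with chosen `α`, with stabilizer
subgroups `G₀ ⊴ G₁ ≤ G` and `H₀ ⊴ H₁ ≤ H`, and let `R` be a representation of the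
two-object category `D_α`, given by a `G`-representation `M`, an `H`-representation `N`,
and a linear map `φ : M → N` satisfying `φ ∘ ρ(g) = σ(h) ∘ φ` whenever `α·g = h·α`.
If `U` is a simple `G₁`-invariant direct summand of `M↓_{G₁}` with `φ(U) ≠ 0`, then:
(1) `U` is a direct summand of the permutation module `k[G₁/G₀]`;
(2) `φ` restricted to `U` is injective, hence an isomorphism onto `φ(U)` compatible with
the identification `G₁/G₀ ≅ H₁/H₀`; and
(3) `φ(U)` is an `H₁`-invariant simple submodule of `N` which is a direct summand of the
permutation module `k[H₁/H₀]`. -/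
theorem stmt15 {k G H X M N : Type*} [Field k] [Group G] [Group H] [Fintype G] [Fintype H]
    (hGord : (Fintype.card G : k) ≠ 0) (hHord : (Fintype.card H : k) ≠ 0)
    [MulAction H X] [MulAction Gᵐᵒᵖ X]
    (hcomm : ∀ (h : H) (g : Gᵐᵒᵖ) (x : X), g • (h • x) = h • (g • x))
    (α : X)
    [AddCommGroup M] [Module k M] [AddCommGroup N] [Module k N]
    [FiniteDimensional k M] [FiniteDimensional k N]
    (ρ : Representation k G M) (σ : Representation k H N) (φ : M →ₗ[k] N)
    (hcompat : ∀ (g : G) (h : H), op g • α = h • α → φ ∘ₗ ρ g = σ h ∘ₗ φ)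
    (U : Submodule k M)
    (hUinv : ∀ g : bisetG1 hcomm α, U.map (ρ (g : G)) ≤ U)
    (hUne : U ≠ ⊥)
    (hUsimple : ∀ W ≤ U, (∀ g : bisetG1 hcomm α, W.map (ρ (g : G)) ≤ W) → W = ⊥ ∨ W = U)
    (hUsummand : ∃ U' : Submodule k M,
      (∀ g : bisetG1 hcomm α, U'.map (ρ (g : G)) ≤ U') ∧ IsCompl U U')
    (hφU : U.map φ ≠ ⊥) :
    -- (1) U is a direct summand of k[G₁/G₀] as a representation of G₁
    (∃ (ι : U →ₗ[k] ((bisetG1 hcomm α ⧸ (bisetG0 α).subgroupOf (bisetG1 hcomm α)) →₀ k))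
        (pr : ((bisetG1 hcomm α ⧸ (bisetG0 α).subgroupOf (bisetG1 hcomm α)) →₀ k) →ₗ[k] U),
      (∀ (g : bisetG1 hcomm α) (u : U),
        ι ((ρ (g : G)).restrict (fun m hm => hUinv g ⟨m, hm, rfl⟩) u) =
          MonoidAlgebra.coeffLinearEquiv k (Representation.ofMulAction k (bisetG1 hcomm α)
            (bisetG1 hcomm α ⧸ (bisetG0 α).subgroupOf (bisetG1 hcomm α)) g
              ((MonoidAlgebra.coeffLinearEquiv k).symm (ι u)))) ∧
      pr ∘ₗ ι = LinearMap.id) ∧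
    -- (2) φ restricted to U is injective (an isomorphism onto φ(U)), compatibly with the
    -- identification G₁/G₀ ≅ H₁/H₀
    ((∀ u ∈ U, φ u = 0 → u = 0) ∧
      ∀ (g : G) (h : H), op g • α = h • α → ∀ u ∈ U, φ (ρ g u) = σ h (φ u)) ∧
    -- (3) φ(U) is an H₁-invariant simple submodule of N and a direct summand of k[H₁/H₀]
    (∃ hinv : ∀ h : bisetH1 hcomm α, ∀ v ∈ U.map φ, σ (h : H) v ∈ U.map φ,
      (∀ W ≤ U.map φ, (∀ h : bisetH1 hcomm α, W.map (σ (h : H)) ≤ W) → W = ⊥ ∨ W = U.map φ) ∧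
      ∃ (ι' : U.map φ →ₗ[k] ((bisetH1 hcomm α ⧸ (bisetH0 α).subgroupOf (bisetH1 hcomm α)) →₀ k))
        (pr' : ((bisetH1 hcomm α ⧸ (bisetH0 α).subgroupOf (bisetH1 hcomm α)) →₀ k) →ₗ[k] U.map φ),
        (∀ (h : bisetH1 hcomm α) (v : U.map φ),
          ι' ((σ (h : H)).restrict (fun n hn => hinv h n hn) v) =
            MonoidAlgebra.coeffLinearEquiv k (Representation.ofMulAction k (bisetH1 hcomm α)
              (bisetH1 hcomm α ⧸ (bisetH0 α).subgroupOf (bisetH1 hcomm α)) h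
                ((MonoidAlgebra.coeffLinearEquiv k).symm (ι' v)))) ∧
        pr' ∘ₗ ι' = LinearMap.id) :=
  stmt15_general hcomm α ρ σ φ hcompat U hUinv hUne hUsimple hφU
end
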